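/- The Laplace transform of t ↦ t^{β-1} E_{α,β}^γ(t^α z) is s^{αγ-β} / (s^α - z)^γ, i.e., ∫_0^∞ e^{-st} t^{β-1} E_{α,β}^γ(t^α z) dt = s^{αγ-β} (s^α - z)^{-γ} for real s > 0 with s^α > |z|, where α > 0, β > 0 and z real. -/

import Mathlib

/-!
Each term of the Prabhakar series is a Gamma integral,
`∫₀^∞ e^{-st} t^{αk+β-1} dt = Γ(αk+β) / s^{αk+β}`, whose Gamma factor cancels the one in the
`k`-th coefficient and leaves `s^{-β} (γ)_k / k! (z / s^α)^k`. Summing the binomial series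
`∑ (γ)_k / k! w^k = (1 - w)^{-γ}` at `w = z / s^α` gives the formula. Termwise integration is
legitimate because the integrals of the absolute values form the same kind of series, which is
dominated by the binomial series for `|γ|` at `|z| / s^α < 1`.
-/

open scoped BigOperators

/-- Pochhammer symbol `(γ)_k = γ(γ+1)⋯(γ+k-1)`. -/
noncomputable def poch (γ : ℝ) (k : ℕ) : ℝ := ∏ i ∈ Finset.range k, (γ + i)

/-- The real-argument Prabhakar function `E_{α,β}^γ(x)`. -/
noncomputable def prabhakarR (α β γ : ℝ) (x : ℝ) : ℝ :=
  ∑' k : ℕ, poch γ k * x ^ k / (Nat.factorial k * Real.Gamma (α * k + β))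

open Real MeasureTheory Set

lemma poch_eq_ascPochhammer_eval (γ : ℝ) (k : ℕ) : poch γ k = (ascPochhammer ℝ k).eval γ := by
  induction k with
  | zero => simp [poch]
  | succ k ih => rw [poch, Finset.prod_range_succ, ← poch, ih, ascPochhammer_succ_eval]

lemma poch_div_factorial (γ : ℝ) (k : ℕ) :
    poch γ k / k.factorial = Ring.choose (γ + k - 1) k := by
  rw [Ring.choose_eq_smul, Polynomial.descPochhammer_smeval_eq_ascPochhammer,
    Polynomial.ascPochhammer_smeval_eq_eval, poch_eq_ascPochhammer_eval, smul_eq_mul,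
    div_eq_inv_mul]
  ring_nf

lemma abs_poch_le (γ : ℝ) (k : ℕ) : |poch γ k| ≤ poch |γ| k := by
  rw [poch, poch, Finset.abs_prod]
  refine Finset.prod_le_prod (fun i _ => abs_nonneg _) fun i _ => ?_
  simpa using abs_add_le γ i

lemma hasSum_poch_div_factorial_mul_pow (γ : ℝ) {x : ℝ} (hx : |x| < 1) :
    HasSum (fun k => poch γ k / k.factorial * x ^ k) ((1 - x) ^ (-γ)) := by
  have h := (one_div_one_sub_rpow_hasFPowerSeriesOnBall_zero γ).hasSum (y := x)
    (by simpa [enorm_eq_nnnorm, ← NNReal.coe_lt_coe] using hx)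
  simp only [FormalMultilinearSeries.ofScalars_apply_eq, smul_eq_mul, zero_add, one_div] at h
  rw [rpow_neg (by linarith [le_abs_self x])]
  simpa only [poch_div_factorial] using h

lemma summable_abs_poch_div_factorial_mul_pow (γ : ℝ) {x : ℝ} (hx : |x| < 1) :
    Summable fun k => |poch γ k / k.factorial * x ^ k| := by
  refine (hasSum_poch_div_factorial_mul_pow |γ| (x := |x|) (by rwa [abs_abs])).summable
    |>.of_nonneg_of_le (fun _ => abs_nonneg _) fun k => ?_
  rw [abs_mul, abs_div, abs_pow, Nat.abs_cast]
  gcongr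
  exact abs_poch_le γ k

lemma integral_rpow_mul_exp_neg_mul_Ioi_pos {a r : ℝ} (ha : 0 < a) (hr : 0 < r) :
    0 < ∫ t in Ioi 0, t ^ (a - 1) * exp (-(r * t)) := by
  rw [integral_rpow_mul_exp_neg_mul_Ioi ha hr]
  have := Gamma_pos_of_pos ha
  positivity

lemma integrableOn_rpow_mul_exp_neg_mul_Ioi {a r : ℝ} (ha : 0 < a) (hr : 0 < r) :
    IntegrableOn (fun t => t ^ (a - 1) * exp (-(r * t))) (Ioi 0) :=
  .of_integral_ne_zero (integral_rpow_mul_exp_neg_mul_Ioi_pos ha hr).ne'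

noncomputable def prabhakarTerm (α β γ x : ℝ) (k : ℕ) : ℝ :=
  poch γ k * x ^ k / (k.factorial * Gamma (α * k + β))

lemma prabhakarR_eq_tsum (α β γ x : ℝ) :
    prabhakarR α β γ x = ∑' k, prabhakarTerm α β γ x k := rfl

section Laplace

variable {α β s : ℝ} (γ z : ℝ) (k : ℕ)

lemma rpow_sub_one_mul_prabhakarTerm {t : ℝ} (ht : 0 < t) :
    t ^ (β - 1) * prabhakarTerm α β γ (t ^ α * z) k =
      prabhakarTerm α β γ z k * t ^ (α * k + β - 1) := by
  have hpow : t ^ (α * k + β - 1) = (t ^ α) ^ k * t ^ (β - 1) := by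
    rw [← rpow_natCast, ← rpow_mul ht.le, ← rpow_add ht]
    ring_nf
  rw [hpow, prabhakarTerm, prabhakarTerm, mul_pow]
  ring

lemma laplace_prabhakarTerm_eqOn :
    EqOn (fun t => exp (-(s * t)) * t ^ (β - 1) * prabhakarTerm α β γ (t ^ α * z) k)
      (fun t => prabhakarTerm α β γ z k * (t ^ (α * k + β - 1) * exp (-(s * t)))) (Ioi 0) :=
  fun t ht => by
    simp only
    rw [mul_assoc, rpow_sub_one_mul_prabhakarTerm γ z k ht]
    ring

lemma integrableOn_laplace_prabhakarTerm (hα : 0 ≤ α) (hβ : 0 < β) (hs : 0 < s) :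
    IntegrableOn (fun t => exp (-(s * t)) * t ^ (β - 1) * prabhakarTerm α β γ (t ^ α * z) k)
      (Ioi 0) :=
  IntegrableOn.congr_fun
    (Integrable.const_mul (integrableOn_rpow_mul_exp_neg_mul_Ioi (by positivity) hs) _)
    (laplace_prabhakarTerm_eqOn γ z k).symm measurableSet_Ioi

lemma integral_laplace_prabhakarTerm (hα : 0 ≤ α) (hβ : 0 < β) (hs : 0 < s) :
    ∫ t in Ioi 0, exp (-(s * t)) * t ^ (β - 1) * prabhakarTerm α β γ (t ^ α * z) k =
      s ^ (-β) * (poch γ k / k.factorial * (z / s ^ α) ^ k) := by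
  have hν : 0 < α * k + β := by positivity
  rw [setIntegral_congr_fun measurableSet_Ioi (laplace_prabhakarTerm_eqOn γ z k),
    integral_const_mul, integral_rpow_mul_exp_neg_mul_Ioi hν hs, prabhakarTerm,
    one_div, inv_rpow hs.le, rpow_add hs, rpow_neg hs.le, div_pow, rpow_mul_natCast hs.le]
  have := (Gamma_pos_of_pos hν).ne'
  have := (rpow_pos_of_pos hs β).ne'
  have := (rpow_pos_of_pos hs α).ne'
  field_simp

lemma integral_norm_laplace_prabhakarTerm (hα : 0 ≤ α) (hβ : 0 < β) (hs : 0 < s) :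
    ∫ t in Ioi 0, ‖exp (-(s * t)) * t ^ (β - 1) * prabhakarTerm α β γ (t ^ α * z) k‖ =
      |∫ t in Ioi 0, exp (-(s * t)) * t ^ (β - 1) * prabhakarTerm α β γ (t ^ α * z) k| := by
  have hnorm : EqOn
      (fun t => ‖exp (-(s * t)) * t ^ (β - 1) * prabhakarTerm α β γ (t ^ α * z) k‖)
      (fun t => |prabhakarTerm α β γ z k| * (t ^ (α * k + β - 1) * exp (-(s * t)))) (Ioi 0) :=
    fun t ht => by
      have h := laplace_prabhakarTerm_eqOn (α := α) (β := β) (s := s) γ z k ht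
      simp only at h ⊢
      rw [h, Real.norm_eq_abs, abs_mul,
        abs_of_pos (mul_pos (rpow_pos_of_pos ht _) (exp_pos _))]
  rw [setIntegral_congr_fun measurableSet_Ioi hnorm,
    setIntegral_congr_fun measurableSet_Ioi (laplace_prabhakarTerm_eqOn γ z k),
    integral_const_mul, integral_const_mul, abs_mul,
    abs_of_pos (integral_rpow_mul_exp_neg_mul_Ioi_pos (by positivity) hs)]

end Laplace

lemma rpow_neg_mul_one_sub_div_rpow {α β γ s z : ℝ} (hs : 0 < s) (hz : z < s ^ α) :
    s ^ (-β) * (1 - z / s ^ α) ^ (-γ) = s ^ (α * γ - β) * (s ^ α - z) ^ (-γ) := by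
  have hsα : 0 < s ^ α := rpow_pos_of_pos hs α
  rw [one_sub_div hsα.ne', div_rpow (by linarith) hsα.le, rpow_neg hsα.le, div_inv_eq_mul,
    sub_eq_add_neg (α * γ), rpow_add hs, rpow_mul hs.le]
  ring

/-- Laplace transform of the Prabhakar kernel:
`∫_0^∞ e^{-st} t^{β-1} E_{α,β}^γ(t^α z) dt = s^{αγ-β} (s^α - z)^{-γ}`
for real `s > 0` with `s^α > |z|`, where `α > 0`, `β > 0` and `z` real. -/
theorem prabhakar_laplace (α β γ z s : ℝ) (hα : 0 < α) (hβ : 0 < β)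
    (hs : 0 < s) (hsz : |z| < s ^ α) :
    ∫ t in Set.Ioi (0 : ℝ),
        Real.exp (-(s * t)) * t ^ (β - 1) * prabhakarR α β γ (t ^ α * z) =
      s ^ (α * γ - β) * (s ^ α - z) ^ (-γ) := by
  have hq : |z / s ^ α| < 1 := by
    rwa [abs_div, abs_of_pos (rpow_pos_of_pos hs α), div_lt_one (rpow_pos_of_pos hs α)]
  have hsummable : Summable fun k => ∫ t in Ioi 0,
      ‖exp (-(s * t)) * t ^ (β - 1) * prabhakarTerm α β γ (t ^ α * z) k‖ := by
    simp only [integral_norm_laplace_prabhakarTerm γ z _ hα.le hβ hs,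
      integral_laplace_prabhakarTerm γ z _ hα.le hβ hs, abs_mul (s ^ (-β))]
    exact (summable_abs_poch_div_factorial_mul_pow γ hq).mul_left _
  calc ∫ t in Ioi 0, exp (-(s * t)) * t ^ (β - 1) * prabhakarR α β γ (t ^ α * z)
      = ∫ t in Ioi 0, ∑' k,
          exp (-(s * t)) * t ^ (β - 1) * prabhakarTerm α β γ (t ^ α * z) k := by
        simp only [prabhakarR_eq_tsum, tsum_mul_left]
    _ = ∑' k, ∫ t in Ioi 0,
          exp (-(s * t)) * t ^ (β - 1) * prabhakarTerm α β γ (t ^ α * z) k :=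
        (integral_tsum_of_summable_integral_norm
          (fun k => integrableOn_laplace_prabhakarTerm γ z k hα.le hβ hs) hsummable).symm
    _ = s ^ (-β) * (1 - z / s ^ α) ^ (-γ) := by
        simp only [integral_laplace_prabhakarTerm γ z _ hα.le hβ hs, tsum_mul_left,
          (hasSum_poch_div_factorial_mul_pow γ hq).tsum_eq]
    _ = s ^ (α * γ - β) * (s ^ α - z) ^ (-γ) :=
        rpow_neg_mul_one_sub_div_rpow hs (lt_of_le_of_lt (le_abs_self z) hsz)
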